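/- arXiv:2508.12982 — 3 statements merged into one kernel-verified Lean document; each statement's English description precedes it below -/
import Mathlib

section
/- Let X be a measurable space, n ≥ 1, and let f : Xⁿ → ℝ be measurable, bounded, nonnegative, and symmetric (invariant under every permutation of its n arguments). Then for all finite measures η, ν on X: ∫_{Xⁿ} f d((η + ν)^{⊗n}) = ∑_{k=0}^n (n choose k) ∫_{Xⁿ} f d(η^{⊗(n−k)} ⊗ ν^{⊗k}). -/
/-!
Expanding every factor of `(η + ν)^{⊗n}` writes it as the sum over `t ⊆ Fin n` of the product
measures with `ν` on the coordinates in `t` and `η` elsewhere. Since `f` is symmetric and a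
permutation of the coordinates carries `t` onto the last `#t` coordinates, the integral of `f`
against the `t`-th term depends only on `#t`, and there are `n.choose k` sets `t` of size `k`.
-/

open MeasureTheory Finset
namespace MeasureTheory

variable {ι : Type*} [Fintype ι]

instance Measure.sigmaFinite_piecewise [DecidableEq ι] {α : ι → Type*}
    [∀ i, MeasurableSpace (α i)] (s : Finset ι) (μ ν : ∀ i, Measure (α i))
    [∀ i, SigmaFinite (μ i)] [∀ i, SigmaFinite (ν i)] (i : ι) :
    SigmaFinite (s.piecewise μ ν i) := by
  unfold Finset.piecewise
  split <;> infer_instance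

theorem Measure.pi_add_eq_sum_pi_piecewise [DecidableEq ι] {α : ι → Type*}
    [∀ i, MeasurableSpace (α i)] (μ ν : ∀ i, Measure (α i)) [∀ i, SigmaFinite (μ i)]
    [∀ i, SigmaFinite (ν i)] :
    Measure.pi (fun i => μ i + ν i) = ∑ t : Finset ι, Measure.pi (t.piecewise ν μ) := by
  refine pi_eq fun s _ => ?_
  simp only [Measure.finsetSum_apply, Measure.pi_pi, Measure.add_apply, add_comm (μ _ _),
    Fintype.prod_add]
  refine Fintype.sum_congr _ _ fun t => ?_
  rw [← prod_mul_prod_compl t]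
  congr 1 <;> refine prod_congr rfl fun i hi => ?_
  · rw [piecewise_eq_of_mem _ _ _ hi]
  · rw [piecewise_eq_of_notMem _ _ _ (mem_compl.1 hi)]

variable {X E : Type*} [MeasurableSpace X] [NormedAddCommGroup E] [NormedSpace ℝ E]
  {f : (ι → X) → E}

theorem integral_pi_comp_perm_of_perm_invariant (hf : ∀ (σ : Equiv.Perm ι) x, f (x ∘ σ) = f x)
    (μ : ι → Measure X) [∀ i, SigmaFinite (μ i)] (σ : Equiv.Perm ι) :
    ∫ x, f x ∂Measure.pi (fun i => μ (σ i)) = ∫ x, f x ∂Measure.pi μ := by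
  rw [← (measurePreserving_piCongrLeft μ σ).integral_comp']
  refine integral_congr_ae (.of_forall fun x => ?_)
  rw [← hf σ.symm x]
  congr 1
  funext i
  simp [MeasurableEquiv.coe_piCongrLeft, Equiv.piCongrLeft_apply_eq_cast]

theorem integral_pi_piecewise_eq_of_card_eq [DecidableEq ι]
    (hf : ∀ (σ : Equiv.Perm ι) x, f (x ∘ σ) = f x)
    (η ν : Measure X) [SigmaFinite η] [SigmaFinite ν] {s t : Finset ι} (hst : #s = #t) :
    ∫ x, f x ∂Measure.pi (s.piecewise (fun _ => ν) (fun _ => η))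
      = ∫ x, f x ∂Measure.pi (t.piecewise (fun _ => ν) (fun _ => η)) := by
  obtain ⟨σ, rfl⟩ := Equiv.Perm.exists_map_finset_eq s t hst
  have : s.piecewise (fun _ => ν) (fun _ => η)
      = fun i => (s.map σ.toEmbedding).piecewise (fun _ => ν) (fun _ => η) (σ i) := by
    funext i
    simp [piecewise]
  rw [this, integral_pi_comp_perm_of_perm_invariant hf]

end MeasureTheory

theorem integral_pi_add_binomial_general {X : Type*} [MeasurableSpace X] (n : ℕ)
    (C : ℝ) (f : (Fin n → X) → ℝ) (hf : Measurable f)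
    (hf0 : ∀ x, 0 ≤ f x) (hfC : ∀ x, f x ≤ C)
    (hsym : ∀ (σ : Equiv.Perm (Fin n)) (x : Fin n → X), f (x ∘ σ) = f x)
    (η ν : Measure X) [IsFiniteMeasure η] [IsFiniteMeasure ν] :
    ∫ x, f x ∂(Measure.pi fun _ : Fin n => η + ν)
      = ∑ k ∈ Finset.range (n + 1), (n.choose k : ℝ) *
          ∫ x, f x ∂(Measure.pi fun i : Fin n => if (i : ℕ) < n - k then η else ν) := by
  set g : ℕ → ℝ := fun k =>
    ∫ x, f x ∂(Measure.pi fun i : Fin n => if (i : ℕ) < n - k then η else ν)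
  have hint : Integrable f (Measure.pi fun _ : Fin n => η + ν) :=
    .of_bound hf.aestronglyMeasurable C
      (.of_forall fun x => by rw [Real.norm_of_nonneg (hf0 x)]; exact hfC x)
  have hterm (t : Finset (Fin n)) :
      ∫ x, f x ∂Measure.pi (t.piecewise (fun _ => ν) (fun _ => η)) = g #t := by
    have hcard : #t = (({i : Fin n | (i : ℕ) < n - #t} : Finset (Fin n))ᶜ).card := by
      rw [card_compl, Fin.card_filter_val_lt, Fintype.card_fin,
        min_eq_right (Nat.sub_le _ _),
        Nat.sub_sub_self ((card_le_univ t).trans_eq (Fintype.card_fin n))]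
    rw [integral_pi_piecewise_eq_of_card_eq hsym η ν hcard]
    congr 2
    funext i
    simp only [piecewise, mem_compl, mem_filter, mem_univ, true_and, ite_not]
  rw [Measure.pi_add_eq_sum_pi_piecewise (fun _ => η) (fun _ => ν)] at hint ⊢
  rw [integral_finsetSum_measure fun t _ => integrable_finsetSum_measure.1 hint t (mem_univ t)]
  simp_rw [hterm]
  rw [← powerset_univ, sum_powerset_apply_card, card_univ, Fintype.card_fin]
  simp only [nsmul_eq_mul, g]

/-- Binomial-type expansion: for a measurable, bounded, nonnegative, symmetric
`f : Xⁿ → ℝ` and finite measures `η, ν`,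
`∫ f d((η+ν)^{⊗n}) = ∑_{k=0}^n (n choose k) ∫ f d(η^{⊗(n−k)} ⊗ ν^{⊗k})`. -/
theorem integral_pi_add_binomial {X : Type*} [MeasurableSpace X] (n : ℕ) (hn : 1 ≤ n)
    (C : ℝ) (f : (Fin n → X) → ℝ) (hf : Measurable f)
    (hf0 : ∀ x, 0 ≤ f x) (hfC : ∀ x, f x ≤ C)
    (hsym : ∀ (σ : Equiv.Perm (Fin n)) (x : Fin n → X), f (x ∘ σ) = f x)
    (η ν : Measure X) [IsFiniteMeasure η] [IsFiniteMeasure ν] :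
    ∫ x, f x ∂(Measure.pi fun _ : Fin n => η + ν)
      = ∑ k ∈ Finset.range (n + 1), (n.choose k : ℝ) *
          ∫ x, f x ∂(Measure.pi fun i : Fin n => if (i : ℕ) < n - k then η else ν) :=
  integral_pi_add_binomial_general n C f hf hf0 hfC hsym η ν
end

section
/- Let X be a measurable space. Fix K ≥ 0, a constant p₀ ∈ [0, K], and for each n ≥ 1 a measurable function pₙ : Xⁿ → ℝ with 0 ≤ pₙ ≤ K, and let x ∈ X. Then the right-hand limit as ε → 0⁺ of (G[ε · δ_x] − p₀)/ε exists and equals p₁(x), where ε · δ_x denotes the Dirac measure at x scaled by ε. -/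
open MeasureTheory

lemma pi_smul_dirac {X : Type*} [MeasurableSpace X] (c : ENNReal) (hc : c ≠ ⊤) (x : X) (m : ℕ) :
    Measure.pi (fun _ : Fin m => c • Measure.dirac x) = c ^ m • Measure.dirac (fun _ => x) := by
  haveI : IsFiniteMeasure (c • Measure.dirac x) := by
    constructor
    simp only [Measure.smul_apply, smul_eq_mul, measure_univ, mul_one, lt_top_iff_ne_top]
    exact hc
  refine Measure.pi_eq fun s hs => ?_
  simp only [Measure.smul_apply, smul_eq_mul]
  rw [Measure.dirac_apply' _ (MeasurableSet.univ_pi hs)]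
  simp only [Measure.dirac_apply' _ (hs _)]
  rw [Finset.prod_mul_distrib, Finset.prod_const, Finset.card_univ, Fintype.card_fin]
  congr 1
  classical
  simp only [Set.indicator_apply, Set.mem_univ_pi, Pi.one_apply]
  by_cases h : ∀ i : Fin m, x ∈ s i
  · simp [h]
  · push_neg at h
    obtain ⟨i, hi⟩ := h
    rw [if_neg (by push_neg; exact ⟨i, hi⟩)]
    exact (Finset.prod_eq_zero (Finset.mem_univ i) (by simp [hi])).symm

lemma tendsto_tsum_pow_mul (c : ℕ → ℝ) (K : ℝ) (hc0 : ∀ n, 0 ≤ c n) (hcK : ∀ n, c n ≤ K) :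
    Filter.Tendsto (fun ε : ℝ => ∑' n : ℕ, ε ^ n * c n)
      (nhdsWithin (0 : ℝ) (Set.Ioi 0)) (nhds (c 0)) := by
  have hmem : ∀ᶠ ε in nhdsWithin (0 : ℝ) (Set.Ioi 0), ε ∈ Set.Ioo (0 : ℝ) (1/2) :=
    Ioo_mem_nhdsGT_of_mem (by norm_num)
  have key : ∀ ε : ℝ, ε ∈ Set.Ioo (0 : ℝ) (1/2) →
      |(∑' n : ℕ, ε ^ n * c n) - c 0| ≤ 2 * K * ε := by
    intro ε hε
    have hε1 : ε < 1 := hε.2.trans (by norm_num)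
    have hgeo : Summable fun n : ℕ => ε ^ n := summable_geometric_of_lt_one hε.1.le hε1
    have hs : Summable fun n : ℕ => ε ^ n * c n := by
      refine Summable.of_nonneg_of_le (fun n => mul_nonneg (pow_nonneg hε.1.le n) (hc0 n))
        (fun n => ?_) (hgeo.mul_right K)
      exact mul_le_mul_of_nonneg_left (hcK n) (pow_nonneg hε.1.le n)
    have hsplit : (∑' n : ℕ, ε ^ n * c n) = ε ^ 0 * c 0 + ∑' n : ℕ, ε ^ (n + 1) * c (n + 1) :=
      Summable.tsum_eq_zero_add hs
    have hs' : Summable fun n : ℕ => ε ^ (n + 1) * c (n + 1) := by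
      simpa using (summable_nat_add_iff 1).2 hs
    have hK : 0 ≤ K := le_trans (hc0 0) (hcK 0)
    have hbound : (∑' n : ℕ, ε ^ (n + 1) * c (n + 1)) ≤ 2 * K * ε := by
      have hsum2 : Summable fun n : ℕ => ε * ((1/2 : ℝ) ^ n * K) :=
        ((summable_geometric_of_lt_one (by norm_num) (by norm_num)).mul_right K).mul_left ε
      have hle : ∀ n : ℕ, ε ^ (n + 1) * c (n + 1) ≤ ε * ((1/2 : ℝ) ^ n * K) := by
        intro n
        rw [pow_succ, mul_comm (ε ^ n) ε, mul_assoc]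
        refine mul_le_mul_of_nonneg_left ?_ hε.1.le
        exact mul_le_mul (pow_le_pow_left₀ hε.1.le hε.2.le n) (hcK (n+1)) (hc0 (n+1))
          (by positivity)
      calc (∑' n : ℕ, ε ^ (n + 1) * c (n + 1)) ≤ ∑' n : ℕ, ε * ((1/2 : ℝ) ^ n * K) :=
            Summable.tsum_le_tsum hle hs' hsum2
        _ = ε * ((∑' n : ℕ, (1/2 : ℝ) ^ n) * K) := by rw [tsum_mul_left, tsum_mul_right]
        _ = 2 * K * ε := by rw [tsum_geometric_two]; ring
    rw [hsplit]
    simp only [pow_zero, one_mul, add_sub_cancel_left]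
    rw [abs_of_nonneg (tsum_nonneg fun n => mul_nonneg (pow_nonneg hε.1.le _) (hc0 _))]
    exact hbound
  have h0 : Filter.Tendsto (fun ε : ℝ => (∑' n : ℕ, ε ^ n * c n) - c 0)
      (nhdsWithin (0 : ℝ) (Set.Ioi 0)) (nhds 0) := by
    apply squeeze_zero_norm' (hmem.mono fun ε hε => by simpa using key ε hε)
    have : Filter.Tendsto (fun ε : ℝ => 2 * K * ε) (nhds 0) (nhds (2 * K * 0)) :=
      (continuous_const.mul continuous_id).tendsto 0
    simpa using this.mono_left nhdsWithin_le_nhds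
  simpa using h0.add_const (c 0)

/-- The right-hand limit as `ε → 0⁺` of `(G[ε·δ_x] − p₀)/ε` exists and equals `p₁(x)`,
where `G[η] = p₀ + ∑_{n=1}^∞ (1/n!) ∫ pₙ d(η^{⊗n})`. -/
theorem pgfm_derivative_at_zero {X : Type*} [MeasurableSpace X] (K p₀ : ℝ) (hK : 0 ≤ K)
    (hp₀ : p₀ ∈ Set.Icc 0 K) (p : ∀ n : ℕ, (Fin n → X) → ℝ)
    (hmeas : ∀ n, 1 ≤ n → Measurable (p n))
    (hp0 : ∀ n, 1 ≤ n → ∀ x, 0 ≤ p n x)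
    (hpK : ∀ n, 1 ≤ n → ∀ x, p n x ≤ K)
    (x : X) :
    Filter.Tendsto (fun ε : ℝ =>
        ((p₀ + ∑' n : ℕ, (1 / (Nat.factorial (n + 1) : ℝ)) *
              ∫ z, p (n + 1) z
                ∂(Measure.pi fun _ : Fin (n + 1) => ENNReal.ofReal ε • Measure.dirac x))
          - p₀) / ε)
      (nhdsWithin (0 : ℝ) (Set.Ioi 0)) (nhds (p 1 fun _ => x)) := by
  set a : ℕ → ℝ := fun n => p (n + 1) (fun _ => x) with ha
  set c : ℕ → ℝ := fun n => (1 / (Nat.factorial (n + 1) : ℝ)) * a n with hc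
  have hfac : ∀ n : ℕ, (1 : ℝ) ≤ (Nat.factorial (n + 1) : ℝ) := fun n => by
    exact_mod_cast (Nat.factorial_pos (n + 1))
  have hinv : ∀ n : ℕ, (1 / (Nat.factorial (n + 1) : ℝ)) ≤ 1 := fun n =>
    div_le_one_of_le₀ (hfac n) (by positivity)
  have hc0 : ∀ n, 0 ≤ c n := fun n =>
    mul_nonneg (by positivity) (hp0 _ (by omega) _)
  have hcK : ∀ n, c n ≤ K := fun n => by
    calc c n ≤ 1 * a n :=
          mul_le_mul_of_nonneg_right (hinv n) (hp0 _ (by omega) _)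
      _ = a n := one_mul _
      _ ≤ K := hpK _ (by omega) _
  have key : (fun ε : ℝ =>
      ((p₀ + ∑' n : ℕ, (1 / (Nat.factorial (n + 1) : ℝ)) *
          ∫ z, p (n + 1) z
            ∂(Measure.pi fun _ : Fin (n + 1) => ENNReal.ofReal ε • Measure.dirac x))
        - p₀) / ε) =ᶠ[nhdsWithin (0 : ℝ) (Set.Ioi 0)] (fun ε => ∑' n : ℕ, ε ^ n * c n) := by
    filter_upwards [self_mem_nhdsWithin] with ε hε
    have hε0 : (0 : ℝ) < ε := hε
    have hterm : ∀ n : ℕ,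
        (∫ z, p (n + 1) z
          ∂(Measure.pi fun _ : Fin (n + 1) => ENNReal.ofReal ε • Measure.dirac x))
        = ε ^ (n + 1) * a n := by
      intro n
      rw [pi_smul_dirac _ ENNReal.ofReal_ne_top x (n + 1), integral_smul_measure,
        integral_dirac' _ _ ((hmeas (n + 1) (by omega)).stronglyMeasurable)]
      rw [ENNReal.toReal_pow, ENNReal.toReal_ofReal hε0.le]
      rfl
    simp only [hterm, add_sub_cancel_left]
    rw [← tsum_div_const]
    refine tsum_congr fun n => ?_
    rw [hc, pow_succ]
    field_simp
  have hmain := tendsto_tsum_pow_mul c K hc0 hcK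
  have hc00 : c 0 = p 1 (fun _ => x) := by simp [hc, ha, Nat.factorial]
  rw [hc00] at hmain
  exact hmain.congr' key.symm
end

section
/- Let X be a measurable space. Fix K ≥ 0, a constant p₀ ∈ [0, K], and for each n ≥ 1 a measurable symmetric function pₙ : Xⁿ → ℝ with 0 ≤ pₙ ≤ K. Then for all finite measures η, ν on X: |G[η + ν] − G[η]| ≤ K · exp(η(X)) · (exp(ν(X)) − 1); in particular, G is continuous at every finite measure η along total-mass-small perturbations by positive measures. -/
/-!
Since `η ≤ η + ν` and product measures are monotone, `(η + ν)^{⊗m} ≥ η^{⊗m}`. Integrating both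
`pₘ ≥ 0` and `K - pₘ ≥ 0` against these two measures shows that the `m`-th term of the series
grows by at most `K ((a + b)^m - a^m) / m!`, where `a = η(X)` and `b = ν(X)`; summing over `m`
gives `K (exp (a + b) - exp a) = K exp a (exp b - 1)`.
-/

open MeasureTheory Set

theorem MeasureTheory.OuterMeasure.pi_mono {ι : Type*} [Fintype ι] {α : ι → Type*}
    {m m' : ∀ i, OuterMeasure (α i)} (h : ∀ i, m i ≤ m' i) :
    OuterMeasure.pi m ≤ OuterMeasure.pi m' :=
  OuterMeasure.le_boundedBy.2 fun _ =>
    (OuterMeasure.boundedBy_le _).trans (Finset.prod_le_prod' fun i _ => h i _)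

theorem MeasureTheory.Measure.pi_mono {ι : Type*} [Fintype ι] {α : ι → Type*}
    [∀ i, MeasurableSpace (α i)] {μ ν : ∀ i, Measure (α i)} (h : ∀ i, μ i ≤ ν i) :
    Measure.pi μ ≤ Measure.pi ν := by
  refine Measure.le_iff.2 fun s hs => ?_
  rw [Measure.pi, Measure.pi, toMeasure_apply _ _ hs, toMeasure_apply _ _ hs]
  exact OuterMeasure.pi_mono (fun i => Measure.toOuterMeasure_le.2 (h i)) s

theorem MeasureTheory.Measure.real_pi_univ_const {X : Type*} [MeasurableSpace X] (m : ℕ)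
    (μ : Measure X) [IsFiniteMeasure μ] :
    (Measure.pi fun _ : Fin m => μ).real univ = μ.real univ ^ m := by
  simp [measureReal_def, Measure.pi_univ, ENNReal.toReal_pow]

theorem MeasureTheory.integrable_of_measurable_of_nonneg_of_le {α : Type*} [MeasurableSpace α]
    {μ : Measure α} [IsFiniteMeasure μ] {f : α → ℝ} {K : ℝ} (hf : Measurable f)
    (h0 : ∀ x, 0 ≤ f x) (hK : ∀ x, f x ≤ K) : Integrable f μ :=
  Integrable.of_bound hf.aestronglyMeasurable K
    (ae_of_all _ fun x => by rw [Real.norm_of_nonneg (h0 x)]; exact hK x)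

theorem MeasureTheory.integral_sub_integral_le_of_le {α : Type*} [MeasurableSpace α]
    {μ ν : Measure α} [IsFiniteMeasure ν] (hμν : μ ≤ ν) {f : α → ℝ} {K : ℝ}
    (hf : Integrable f ν) (hfK : ∀ x, f x ≤ K) :
    ∫ x, f x ∂ν - ∫ x, f x ∂μ ≤ K * ν.real univ - K * μ.real univ := by
  have := isFiniteMeasure_of_le ν hμν
  have hmono : ∫ x, (K - f x) ∂μ ≤ ∫ x, (K - f x) ∂ν :=
    integral_mono_measure hμν (ae_of_all _ fun x => sub_nonneg.2 (hfK x))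
      ((integrable_const K).sub hf)
  rw [integral_sub (integrable_const K) (hf.mono_measure hμν), integral_sub (integrable_const K) hf,
    integral_const, integral_const, smul_eq_mul, smul_eq_mul] at hmono
  linarith

theorem Real.hasSum_pow_succ_div_factorial_succ (x : ℝ) :
    HasSum (fun n : ℕ => x ^ (n + 1) / (n + 1).factorial) (Real.exp x - 1) := by
  have h := NormedSpace.expSeries_div_hasSum_exp (𝔸 := ℝ) x
  rw [← Real.exp_eq_exp_ℝ] at h
  simpa using (hasSum_nat_add_iff' 1).2 h

theorem abs_tsum_sub_tsum_le {ι : Type*} {A B c d : ι → ℝ} (hB : 0 ≤ B) (hBA : B ≤ A)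
    (hAc : A ≤ c) (hc : Summable c) (hd : Summable d) (h : A - B ≤ c - d) :
    |∑' i, A i - ∑' i, B i| ≤ ∑' i, c i - ∑' i, d i := by
  have hA : Summable A := hc.of_nonneg_of_le (fun i => (hB i).trans (hBA i)) hAc
  have hB' : Summable B := hA.of_nonneg_of_le hB hBA
  rw [← hA.tsum_sub hB', ← hc.tsum_sub hd,
    abs_of_nonneg (tsum_nonneg fun i => sub_nonneg.2 (hBA i))]
  exact (hA.sub hB').tsum_le_tsum h (hc.sub hd)

theorem exists_pos_forall_lt_mul_exp_sub_one_lt {C ε : ℝ} (hC : 0 ≤ C) (hε : 0 < ε) :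
    ∃ δ > 0, ∀ b < δ, C * (Real.exp b - 1) < ε := by
  have hq : 0 < ε / (C + 1) := by positivity
  refine ⟨Real.log (1 + ε / (C + 1)), Real.log_pos (by linarith), fun b hb => ?_⟩
  have hexp : Real.exp b - 1 < ε / (C + 1) := by
    have := Real.exp_lt_exp.2 hb
    rw [Real.exp_log (by linarith)] at this
    linarith
  calc C * (Real.exp b - 1) ≤ C * (ε / (C + 1)) := by gcongr
    _ < (C + 1) * (ε / (C + 1)) := by gcongr; linarith
    _ = ε := mul_div_cancel₀ ε (by positivity)

open scoped Nat

section PGFM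

variable {X : Type*} [MeasurableSpace X] {K : ℝ} {p : ∀ n, (Fin n → X) → ℝ} {μ μ' : Measure X}

/-- The term of order `n + 1` of the series defining `G[μ]`. -/
noncomputable def pgfmTerm (p : ∀ n, (Fin n → X) → ℝ) (μ : Measure X) (n : ℕ) : ℝ :=
  (1 / ((n + 1)! : ℝ)) * ∫ z, p (n + 1) z ∂(Measure.pi fun _ : Fin (n + 1) => μ)

theorem pgfmTerm_nonneg (hp0 : ∀ n x, 0 ≤ p (n + 1) x) (n : ℕ) : 0 ≤ pgfmTerm p μ n :=
  mul_nonneg (by positivity) (integral_nonneg (hp0 n))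

theorem pgfmTerm_le [IsFiniteMeasure μ] (hp0 : ∀ n x, 0 ≤ p (n + 1) x)
    (hpK : ∀ n x, p (n + 1) x ≤ K) (n : ℕ) :
    pgfmTerm p μ n ≤ K * (μ.real univ ^ (n + 1) / (n + 1)!) := by
  have hint : ∫ z, p (n + 1) z ∂(Measure.pi fun _ : Fin (n + 1) => μ)
      ≤ K * μ.real univ ^ (n + 1) := by
    calc _ ≤ ∫ _, K ∂(Measure.pi fun _ : Fin (n + 1) => μ) :=
          integral_mono_of_nonneg (ae_of_all _ (hp0 n)) (integrable_const K) (ae_of_all _ (hpK n))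
      _ = K * μ.real univ ^ (n + 1) := by
          rw [integral_const, smul_eq_mul, Measure.real_pi_univ_const, mul_comm]
  rw [pgfmTerm, mul_div_assoc', one_div_mul_eq_div]
  gcongr

theorem pgfmTerm_mono [IsFiniteMeasure μ'] (hμ : μ ≤ μ') (hmeas : ∀ n, Measurable (p (n + 1)))
    (hp0 : ∀ n x, 0 ≤ p (n + 1) x) (hpK : ∀ n x, p (n + 1) x ≤ K) (n : ℕ) :
    pgfmTerm p μ n ≤ pgfmTerm p μ' n := by
  refine mul_le_mul_of_nonneg_left ?_ (by positivity)
  exact integral_mono_measure (Measure.pi_mono fun _ => hμ) (ae_of_all _ (hp0 n))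
    (integrable_of_measurable_of_nonneg_of_le (hmeas n) (hp0 n) (hpK n))

theorem pgfmTerm_sub_le [IsFiniteMeasure μ'] (hμ : μ ≤ μ') (hmeas : ∀ n, Measurable (p (n + 1)))
    (hp0 : ∀ n x, 0 ≤ p (n + 1) x) (hpK : ∀ n x, p (n + 1) x ≤ K) (n : ℕ) :
    pgfmTerm p μ' n - pgfmTerm p μ n ≤
      K * (μ'.real univ ^ (n + 1) / (n + 1)!) - K * (μ.real univ ^ (n + 1) / (n + 1)!) := by
  have := isFiniteMeasure_of_le μ' hμ
  have h := integral_sub_integral_le_of_le (Measure.pi_mono fun _ : Fin (n + 1) => hμ)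
    (integrable_of_measurable_of_nonneg_of_le (hmeas n) (hp0 n) (hpK n)) (hpK n)
  rw [Measure.real_pi_univ_const, Measure.real_pi_univ_const] at h
  rw [pgfmTerm, pgfmTerm, ← mul_sub]
  calc _ ≤ 1 / ((n + 1)! : ℝ) * (K * μ'.real univ ^ (n + 1) - K * μ.real univ ^ (n + 1)) := by
        gcongr
    _ = _ := by ring

theorem abs_pgfm_sub_le_of_le [IsFiniteMeasure μ'] (hμ : μ ≤ μ') (p₀ : ℝ)
    (hmeas : ∀ n, Measurable (p (n + 1)))
    (hp0 : ∀ n x, 0 ≤ p (n + 1) x) (hpK : ∀ n x, p (n + 1) x ≤ K) :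
    |(p₀ + ∑' n, pgfmTerm p μ' n) - (p₀ + ∑' n, pgfmTerm p μ n)| ≤
      K * (Real.exp (μ'.real univ) - Real.exp (μ.real univ)) := by
  have := isFiniteMeasure_of_le μ' hμ
  have hexp (ρ : Measure X) : HasSum (fun n => K * (ρ.real univ ^ (n + 1) / (n + 1)!))
      (K * (Real.exp (ρ.real univ) - 1)) :=
    (Real.hasSum_pow_succ_div_factorial_succ _).mul_left K
  have h := abs_tsum_sub_tsum_le (pgfmTerm_nonneg hp0) (pgfmTerm_mono hμ hmeas hp0 hpK)
    (pgfmTerm_le hp0 hpK) (hexp μ').summable (hexp μ).summable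
    (pgfmTerm_sub_le hμ hmeas hp0 hpK)
  rw [(hexp μ').tsum_eq, (hexp μ).tsum_eq] at h
  rw [add_sub_add_left_eq_sub]
  linarith

end PGFM

theorem pgfm_continuity_bound_general {X : Type*} [MeasurableSpace X] (K p₀ : ℝ) (hK : 0 ≤ K)
    (p : ∀ n : ℕ, (Fin n → X) → ℝ)
    (hmeas : ∀ n, 1 ≤ n → Measurable (p n))
    (hp0 : ∀ n, 1 ≤ n → ∀ x, 0 ≤ p n x)
    (hpK : ∀ n, 1 ≤ n → ∀ x, p n x ≤ K)
    (η : Measure X) [IsFiniteMeasure η] :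
    (∀ ν : Measure X, IsFiniteMeasure ν →
      |(p₀ + ∑' n : ℕ, (1 / (Nat.factorial (n + 1) : ℝ)) *
            ∫ z, p (n + 1) z ∂(Measure.pi fun _ : Fin (n + 1) => η + ν))
        - (p₀ + ∑' n : ℕ, (1 / (Nat.factorial (n + 1) : ℝ)) *
            ∫ z, p (n + 1) z ∂(Measure.pi fun _ : Fin (n + 1) => η))|
      ≤ K * Real.exp (η Set.univ).toReal * (Real.exp (ν Set.univ).toReal - 1)) ∧
    (∀ ε : ℝ, 0 < ε → ∃ δ : ℝ, 0 < δ ∧ ∀ ν : Measure X, IsFiniteMeasure ν →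
      (ν Set.univ).toReal < δ →
      |(p₀ + ∑' n : ℕ, (1 / (Nat.factorial (n + 1) : ℝ)) *
            ∫ z, p (n + 1) z ∂(Measure.pi fun _ : Fin (n + 1) => η + ν))
        - (p₀ + ∑' n : ℕ, (1 / (Nat.factorial (n + 1) : ℝ)) *
            ∫ z, p (n + 1) z ∂(Measure.pi fun _ : Fin (n + 1) => η))| < ε) := by
  have hbound (ν : Measure X) (_ : IsFiniteMeasure ν) :
      |(p₀ + ∑' n, pgfmTerm p (η + ν) n) - (p₀ + ∑' n, pgfmTerm p η n)|
        ≤ K * Real.exp (η.real univ) * (Real.exp (ν.real univ) - 1) := by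
    have h := abs_pgfm_sub_le_of_le (μ' := η + ν) (Measure.le_add_right le_rfl) p₀
      (fun n => hmeas (n + 1) n.succ_pos) (fun n => hp0 (n + 1) n.succ_pos)
      (fun n => hpK (n + 1) n.succ_pos)
    rwa [measureReal_add_apply, Real.exp_add, ← mul_sub_one, ← mul_assoc] at h
  refine ⟨hbound, fun ε hε => ?_⟩
  obtain ⟨δ, hδ, hsmall⟩ := exists_pos_forall_lt_mul_exp_sub_one_lt
    (C := K * Real.exp (η.real univ)) (by positivity) hε
  exact ⟨δ, hδ, fun ν hν hνδ => (hbound ν hν).trans_lt (hsmall _ hνδ)⟩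

/-- Continuity bound for the PGFM `G[η] = p₀ + ∑_{n=1}^∞ (1/n!) ∫ pₙ d(η^{⊗n})`:
`|G[η+ν] − G[η]| ≤ K exp(η(X)) (exp(ν(X)) − 1)` for all finite measures `η, ν`;
in particular `G` is continuous at every finite `η` along perturbations by positive
measures of small total mass. -/
theorem pgfm_continuity_bound {X : Type*} [MeasurableSpace X] (K p₀ : ℝ) (hK : 0 ≤ K)
    (hp₀ : p₀ ∈ Set.Icc 0 K) (p : ∀ n : ℕ, (Fin n → X) → ℝ)
    (hmeas : ∀ n, 1 ≤ n → Measurable (p n))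
    (hp0 : ∀ n, 1 ≤ n → ∀ x, 0 ≤ p n x)
    (hpK : ∀ n, 1 ≤ n → ∀ x, p n x ≤ K)
    (hsym : ∀ n, 1 ≤ n → ∀ (σ : Equiv.Perm (Fin n)) (x : Fin n → X), p n (x ∘ σ) = p n x)
    (η : Measure X) [IsFiniteMeasure η] :
    (∀ ν : Measure X, IsFiniteMeasure ν →
      |(p₀ + ∑' n : ℕ, (1 / (Nat.factorial (n + 1) : ℝ)) *
            ∫ z, p (n + 1) z ∂(Measure.pi fun _ : Fin (n + 1) => η + ν))
        - (p₀ + ∑' n : ℕ, (1 / (Nat.factorial (n + 1) : ℝ)) *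
            ∫ z, p (n + 1) z ∂(Measure.pi fun _ : Fin (n + 1) => η))|
      ≤ K * Real.exp (η Set.univ).toReal * (Real.exp (ν Set.univ).toReal - 1)) ∧
    (∀ ε : ℝ, 0 < ε → ∃ δ : ℝ, 0 < δ ∧ ∀ ν : Measure X, IsFiniteMeasure ν →
      (ν Set.univ).toReal < δ →
      |(p₀ + ∑' n : ℕ, (1 / (Nat.factorial (n + 1) : ℝ)) *
            ∫ z, p (n + 1) z ∂(Measure.pi fun _ : Fin (n + 1) => η + ν))
        - (p₀ + ∑' n : ℕ, (1 / (Nat.factorial (n + 1) : ℝ)) *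
            ∫ z, p (n + 1) z ∂(Measure.pi fun _ : Fin (n + 1) => η))| < ε) :=
  pgfm_continuity_bound_general K p₀ hK p hmeas hp0 hpK η
end
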